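/- Let n ≥ 1 and M0, K0 > 0. Let L : ℝⁿ × ℝⁿ × ℝⁿ → ℝ be continuous, ℤⁿ-periodic in its second argument, convex in its third argument, and satisfy |v|²/2 − K0 ≤ L(x,y,v) ≤ |v|²/2 + K0 for all x, y, v ∈ ℝⁿ. For c, x, y ∈ ℝⁿ and t > 0 define m^c(t,x,y) := inf{ ∫₀ᵗ L(c, γ(s), γ̇(s)) ds : γ : [0,t] → ℝⁿ absolutely continuous, γ(0) = x, γ(t) = y }. Then there exists a constant C > 0 depending only on n, M0, K0 such that for every c ∈ ℝⁿ, every t > 0, and every y ∈ ℝⁿ with |y| ≤ M0 t, one has m^c(t, y, 2y) ≤ m^c(t, 0, y) + C. -/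

import Mathlib

open MeasureTheory Real Set

noncomputable section

/-- `ℝⁿ` with the Euclidean norm. -/
abbrev E (n : ℕ) : Type := EuclideanSpace ℝ (Fin n)

/-- A vector in `ℝⁿ` with integer coordinates. -/
def intVec (n : ℕ) (k : Fin n → ℤ) : E n := WithLp.toLp 2 (fun i => (k i : ℝ))

/-- `γ : [a,b] → ℝⁿ` is absolutely continuous with (a.e.) derivative `γ'`. -/
def IsAC {n : ℕ} (a b : ℝ) (γ γ' : ℝ → E n) : Prop :=
  IntegrableOn γ' (Icc a b) volume ∧
    ∀ c d : ℝ, a ≤ c → c ≤ d → d ≤ b → γ d - γ c = ∫ s in c..d, γ' s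

/-- Frozen-coefficient cost
`m^c(t,x,y) = inf { ∫₀ᵗ L(c, γ(s), γ̇(s)) ds : γ AC, γ(0)=x, γ(t)=y }`. -/
def mC {n : ℕ} (L : E n → E n → E n → ℝ) (c : E n) (t : ℝ) (x y : E n) : ℝ :=
  sInf { r | ∃ γ γ' : ℝ → E n, IsAC 0 t γ γ' ∧ γ 0 = x ∧ γ t = y ∧
    IntervalIntegrable (fun s => L c (γ s) (γ' s)) volume 0 t ∧
    r = ∫ s in (0:ℝ)..t, L c (γ s) (γ' s) }


/-! Rounding `y` down to the lattice point `k` gives `‖y - k‖² ≤ n`. A path from `y` to `2y` in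
time `t` is then a unit-time segment `y → k`, the `k`-translate of a path `0 → y` of duration
`t - 2` (which costs the same, by periodicity), and a unit-time segment `y + k → 2y`; hence
`m(t, y, 2y) ≤ m(t - 2, 0, y) + n + 2 K0`. To win back the two units of time, cut a window
`[j, j + 3]` out of a near-minimiser for `m(t, 0, y)` and bridge it by a unit-time segment: the
action controls `∫ ‖γ̇‖` by `O(t)` (as `‖y‖ ≤ M0 t`), so some window has displacement `O(1)`.
For `t < 3` both costs are `O(1)` directly from the quadratic bounds on `L`. -/

open intervalIntegral

theorem exists_integral_window_le {f : ℝ → ℝ} {t ℓ : ℝ} (hℓ : 0 < ℓ) (hℓt : ℓ ≤ t)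
    (hf0 : ∀ s, 0 ≤ f s) (hf : IntervalIntegrable f volume 0 t) :
    ∃ j, 0 ≤ j ∧ j + ℓ ≤ t ∧ ∫ s in j..j + ℓ, f s ≤ 2 * ℓ / t * ∫ s in 0..t, f s := by
  have ht : 0 < t := hℓ.trans_le hℓt
  set N := ⌊t / ℓ⌋₊
  have hN : (1 : ℝ) ≤ N := by exact_mod_cast Nat.le_floor (by rwa [Nat.cast_one, one_le_div hℓ])
  have hNt : N * ℓ ≤ t := (le_div_iff₀ hℓ).1 (Nat.floor_le (by positivity))
  have htN : t ≤ 2 * N * ℓ := by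
    have := (div_lt_iff₀ hℓ).1 (Nat.lt_floor_add_one (t / ℓ))
    nlinarith
  have hint : ∀ k < N, IntervalIntegrable f volume (k * ℓ) ((k + 1 : ℕ) * ℓ) := fun k hk => by
    have hk : ((k + 1 : ℕ) : ℝ) ≤ N := by exact_mod_cast hk
    push_cast at hk ⊢
    exact hf.mono_set (uIcc_subset_uIcc (mem_uIcc_of_le (by positivity) (by nlinarith))
      (mem_uIcc_of_le (by positivity) (by nlinarith)))
  have hsum : ∑ k ∈ Finset.range N, ∫ s in k * ℓ..(k + 1 : ℕ) * ℓ, f s ≤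
      ∑ _k ∈ Finset.range N, (∫ s in 0..t, f s) / N := by
    rw [sum_integral_adjacent_intervals hint, Finset.sum_const, Finset.card_range, nsmul_eq_mul,
      mul_div_cancel₀ _ (by positivity), Nat.cast_zero, zero_mul]
    exact integral_mono_interval le_rfl (by positivity) hNt (ae_of_all _ hf0) hf
  obtain ⟨k, hk, hle⟩ := Finset.exists_le_of_sum_le
    (Finset.nonempty_range_iff.2 (by exact_mod_cast (zero_lt_one.trans_le hN).ne')) hsum
  have hkN : (k : ℝ) + 1 ≤ N := by exact_mod_cast Finset.mem_range.1 hk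
  have hI : 0 ≤ ∫ s in 0..t, f s := integral_nonneg ht.le fun s _ => hf0 s
  refine ⟨k * ℓ, by positivity, by nlinarith, ?_⟩
  calc ∫ s in k * ℓ..k * ℓ + ℓ, f s = ∫ s in k * ℓ..(k + 1 : ℕ) * ℓ, f s := by push_cast; ring_nf
    _ ≤ (∫ s in 0..t, f s) / N := hle
    _ ≤ 2 * ℓ / t * ∫ s in 0..t, f s := by
      rw [div_le_iff₀ (by positivity), mul_comm, ← mul_assoc]
      exact le_mul_of_one_le_left hI (by rw [mul_div_assoc', le_div_iff₀ ht]; linarith)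

theorem norm_sub_intVec_floor_sq_le {n : ℕ} (y : E n) :
    ‖y - intVec n (fun i => ⌊y i⌋)‖ ^ 2 ≤ n := by
  rw [EuclideanSpace.norm_eq, Real.sq_sqrt (by positivity)]
  calc ∑ i, ‖(y - intVec n fun i => ⌊y i⌋) i‖ ^ 2 ≤ ∑ _i : Fin n, (1 : ℝ) := by
        refine Finset.sum_le_sum fun i _ => ?_
        have h₁ : (⌊y i⌋ : ℝ) ≤ y i := Int.floor_le _
        have h₂ : y i < ⌊y i⌋ + 1 := Int.lt_floor_add_one _
        simp only [intVec, PiLp.sub_apply, Real.norm_eq_abs, sq_abs]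
        nlinarith
    _ = n := by simp

namespace IsAC

variable {n : ℕ} {a b : ℝ} {γ γ' : ℝ → E n}

theorem mono (h : IsAC a b γ γ') {a' b' : ℝ} (ha : a ≤ a') (hb : b' ≤ b) :
    IsAC a' b' γ γ' :=
  ⟨h.1.mono_set (Icc_subset_Icc ha hb),
    fun c d hc hcd hd => h.2 c d (ha.trans hc) hcd (hd.trans hb)⟩

theorem of_sub_left (hi : IntegrableOn γ' (Icc a b))
    (h : ∀ d ∈ Icc a b, γ d - γ a = ∫ s in a..d, γ' s) : IsAC a b γ γ' := by
  refine ⟨hi, fun c d hac hcd hdb => ?_⟩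
  have hc : c ∈ Icc a b := ⟨hac, hcd.trans hdb⟩
  have hd : d ∈ Icc a b := ⟨hac.trans hcd, hdb⟩
  have hint : ∀ e ∈ Icc a b, IntervalIntegrable γ' volume a e := fun e he =>
    (intervalIntegrable_iff_integrableOn_Icc_of_le he.1).2
      (hi.mono_set (Icc_subset_Icc le_rfl he.2))
  rw [← integral_interval_sub_left (hint d hd) (hint c hc), ← h d hd, ← h c hc]
  abel

theorem line (a b : ℝ) (p v : E n) : IsAC a b (fun s => p + (s - a) • v) (fun _ => v) := by
  refine ⟨integrableOn_const measure_Icc_lt_top.ne, fun c d _ _ _ => ?_⟩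
  rw [intervalIntegral.integral_const, add_sub_add_left_eq_sub, ← sub_smul,
    sub_sub_sub_cancel_right]

theorem add_const (h : IsAC a b γ γ') (v : E n) : IsAC a b (fun s => γ s + v) γ' :=
  ⟨h.1, fun c d hc hcd hd => by rw [add_sub_add_right_eq_sub]; exact h.2 c d hc hcd hd⟩

theorem comp_add_right {τ : ℝ} (h : IsAC (a + τ) (b + τ) γ γ') (hab : a ≤ b) :
    IsAC a b (fun s => γ (s + τ)) (fun s => γ' (s + τ)) := by
  refine ⟨?_, fun c d hc hcd hd => ?_⟩
  · have hτ : IntervalIntegrable γ' volume (a + τ) (b + τ) :=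
      (intervalIntegrable_iff_integrableOn_Icc_of_le (by linarith)).2 h.1
    have := hτ.comp_add_right τ
    rwa [add_sub_cancel_right, add_sub_cancel_right,
      intervalIntegrable_iff_integrableOn_Icc_of_le hab] at this
  · rw [integral_comp_add_right]
    exact h.2 (c + τ) (d + τ) (by linarith) (by linarith) (by linarith)

theorem piecewise {c : ℝ} {γ₂ γ₂' : ℝ → E n} (hab : a ≤ b) (hbc : b ≤ c)
    (h₁ : IsAC a b γ γ') (h₂ : IsAC b c γ₂ γ₂') (hb : γ b = γ₂ b) :
    IsAC a c (fun s => if s ≤ b then γ s else γ₂ s)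
      (fun s => if s ≤ b then γ' s else γ₂' s) := by
  set η' : ℝ → E n := fun s => if s ≤ b then γ' s else γ₂' s
  have e₁ : EqOn η' γ' (Iic b) := fun s hs => if_pos hs
  have e₂ : EqOn η' γ₂' (Ioi b) := fun s hs => if_neg (not_le.2 hs)
  have hi : IntegrableOn η' (Icc a c) := by
    rw [← Icc_union_Ioc_eq_Icc hab hbc]
    exact (h₁.1.congr_fun (e₁.mono Icc_subset_Iic_self).symm measurableSet_Icc).union
      ((h₂.1.mono_set Ioc_subset_Icc_self).congr_fun (e₂.mono Ioc_subset_Ioi_self).symm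
        measurableSet_Ioc)
  refine of_sub_left hi fun d hd => ?_
  have hint : ∀ {e f}, a ≤ e → e ≤ f → f ≤ c → IntervalIntegrable η' volume e f :=
    fun hae hef hfc => (intervalIntegrable_iff_integrableOn_Icc_of_le hef).2
      (hi.mono_set (Icc_subset_Icc hae hfc))
  simp only [if_pos hab]
  rcases le_or_gt d b with hdb | hbd
  · rw [if_pos hdb, integral_congr (e₁.mono fun s hs => ?_)]
    · exact h₁.2 a d le_rfl hd.1 hdb
    · rw [uIcc_of_le hd.1] at hs
      exact hs.2.trans hdb
  · rw [if_neg hbd.not_ge, ← integral_add_adjacent_intervals (hint le_rfl hab hbc)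
      (hint hab hbd.le hd.2), integral_congr (e₁.mono fun s hs => ?_),
      integral_congr_Ioo_of_le hbd.le (e₂.mono Ioo_subset_Ioi_self),
      ← h₁.2 a b le_rfl hab le_rfl, ← h₂.2 b d le_rfl hbd.le hd.2, hb]
    · abel
    · rw [uIcc_of_le hab] at hs
      exact hs.2

end IsAC

def QuadraticallyBounded {n : ℕ} (K0 : ℝ) (L : E n → E n → E n → ℝ) : Prop :=
  ∀ x y v, ‖v‖ ^ 2 / 2 - K0 ≤ L x y v ∧ L x y v ≤ ‖v‖ ^ 2 / 2 + K0

namespace QuadraticallyBounded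

variable {n : ℕ} {K0 : ℝ} {L : E n → E n → E n → ℝ}

theorem neg_le (hL : QuadraticallyBounded K0 L) (x y v : E n) : -K0 ≤ L x y v := by
  linarith [(hL x y v).1, sq_nonneg ‖v‖]

theorem norm_le (hL : QuadraticallyBounded K0 L) (x y v : E n) :
    ‖v‖ ≤ L x y v + K0 + 1 / 2 := by
  nlinarith [(hL x y v).1, sq_nonneg (‖v‖ - 1)]

end QuadraticallyBounded

section Cost

variable {n : ℕ} {K0 : ℝ} {L : E n → E n → E n → ℝ} {c : E n} {t : ℝ} {x y : E n}

variable (L c) in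
/-- `mC L c t x y` is by definition `sInf (costSet L c t x y)`. -/
def costSet (t : ℝ) (x y : E n) : Set ℝ :=
  { r | ∃ γ γ' : ℝ → E n, IsAC 0 t γ γ' ∧ γ 0 = x ∧ γ t = y ∧
    IntervalIntegrable (fun s => L c (γ s) (γ' s)) volume 0 t ∧
    r = ∫ s in (0:ℝ)..t, L c (γ s) (γ' s) }

theorem neg_mul_le_of_mem_costSet (hL : QuadraticallyBounded K0 L) (ht : 0 ≤ t) {r : ℝ}
    (hr : r ∈ costSet L c t x y) : -K0 * t ≤ r := by
  obtain ⟨γ, γ', -, -, -, hI, rfl⟩ := hr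
  have h := integral_mono_on ht intervalIntegrable_const hI fun s _ => hL.neg_le c (γ s) (γ' s)
  rwa [intervalIntegral.integral_const, sub_zero, smul_eq_mul, mul_comm] at h

theorem mC_le_of_mem_costSet (hL : QuadraticallyBounded K0 L) (ht : 0 ≤ t) {r : ℝ}
    (hr : r ∈ costSet L c t x y) : mC L c t x y ≤ r :=
  csInf_le ⟨-K0 * t, fun _ hr => neg_mul_le_of_mem_costSet hL ht hr⟩ hr

theorem exists_mem_costSet_le (hL : QuadraticallyBounded K0 L)
    (hcont : Continuous (fun q : E n × E n × E n => L q.1 q.2.1 q.2.2)) (ht : 0 < t)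
    (x y : E n) : ∃ r ∈ costSet L c t x y, r ≤ ‖y - x‖ ^ 2 / (2 * t) + K0 * t := by
  set v := t⁻¹ • (y - x)
  have hv : ‖v‖ = ‖y - x‖ / t := by
    rw [norm_smul, norm_inv, Real.norm_of_nonneg ht.le, inv_mul_eq_div]
  have hI : IntervalIntegrable (fun s => L c (x + (s - 0) • v) v) volume 0 t :=
    (hcont.comp (by fun_prop : Continuous fun s : ℝ => (c, x + (s - 0) • v, v))).intervalIntegrable
      0 t
  refine ⟨_, ⟨_, _, IsAC.line 0 t x v, by simp, ?_, hI, rfl⟩, ?_⟩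
  · rw [sub_zero, smul_smul, mul_inv_cancel₀ ht.ne', one_smul, add_sub_cancel]
  · calc ∫ s in (0:ℝ)..t, L c (x + (s - 0) • v) v ≤ ∫ _ in (0:ℝ)..t, (‖v‖ ^ 2 / 2 + K0) :=
          integral_mono_on ht.le hI intervalIntegrable_const fun s _ => (hL c _ v).2
      _ = ‖y - x‖ ^ 2 / (2 * t) + K0 * t := by
          rw [intervalIntegral.integral_const, smul_eq_mul, hv]
          field_simp
          ring

theorem mC_le_line (hL : QuadraticallyBounded K0 L)
    (hcont : Continuous (fun q : E n × E n × E n => L q.1 q.2.1 q.2.2)) (ht : 0 < t)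
    (x y : E n) : mC L c t x y ≤ ‖y - x‖ ^ 2 / (2 * t) + K0 * t :=
  let ⟨_, hr, hle⟩ := exists_mem_costSet_le (c := c) hL hcont ht x y
  (mC_le_of_mem_costSet hL ht.le hr).trans hle

theorem mC_le_of_norm_sub_le (hL : QuadraticallyBounded K0 L)
    (hcont : Continuous (fun q : E n × E n × E n => L q.1 q.2.1 q.2.2)) {M0 : ℝ} (ht : 0 < t)
    (hxy : ‖y - x‖ ≤ M0 * t) : mC L c t x y ≤ (M0 ^ 2 / 2 + K0) * t := by
  have hsq := pow_le_pow_left₀ (norm_nonneg _) hxy 2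
  have : ‖y - x‖ ^ 2 / (2 * t) ≤ M0 ^ 2 / 2 * t := by
    rw [div_le_iff₀ (by positivity)]
    nlinarith
  linarith [mC_le_line (c := c) hL hcont ht x y]

theorem mC_add_of_periodic {p : E n} (hp : ∀ z v, L c (z + p) v = L c z v) :
    mC L c t (x + p) (y + p) = mC L c t x y := by
  have key : ∀ {q : E n} {x y : E n}, (∀ z v, L c (z + q) v = L c z v) →
      costSet L c t x y ⊆ costSet L c t (x + q) (y + q) := by
    rintro q x y hq _ ⟨γ, γ', hγ, rfl, rfl, hI, rfl⟩
    exact ⟨fun s => γ s + q, γ', hγ.add_const q, rfl, rfl, by simpa only [hq] using hI,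
      by simp only [hq]⟩
  have hback := key (q := -p) (x := x + p) (y := y + p) fun z v => by
    simpa using (hp (z + -p) v).symm
  simp only [add_neg_cancel_right] at hback
  exact congrArg sInf (hback.antisymm (key hp))

theorem costSet_nonempty (hL : QuadraticallyBounded K0 L)
    (hcont : Continuous (fun q : E n × E n × E n => L q.1 q.2.1 q.2.2)) (ht : 0 < t)
    (x y : E n) : (costSet L c t x y).Nonempty :=
  let ⟨r, hr, _⟩ := exists_mem_costSet_le (c := c) hL hcont ht x y
  ⟨r, hr⟩

theorem neg_mul_le_mC (hL : QuadraticallyBounded K0 L)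
    (hcont : Continuous (fun q : E n × E n × E n => L q.1 q.2.1 q.2.2)) (ht : 0 < t)
    (x y : E n) : -K0 * t ≤ mC L c t x y :=
  le_csInf (costSet_nonempty hL hcont ht x y) fun _ hr => neg_mul_le_of_mem_costSet hL ht.le hr

theorem add_mem_costSet {s : ℝ} {z : E n} {r₁ r₂ : ℝ} (hs : 0 ≤ s) (ht : 0 ≤ t)
    (h₁ : r₁ ∈ costSet L c s x y) (h₂ : r₂ ∈ costSet L c t y z) :
    r₁ + r₂ ∈ costSet L c (s + t) x z := by
  obtain ⟨γ₁, γ₁', hγ₁, rfl, hγ₁s, hI₁, rfl⟩ := h₁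
  obtain ⟨γ₂, γ₂', hγ₂, hγ₂0, rfl, hI₂, rfl⟩ := h₂
  have hγ₂s : IsAC s (s + t) (fun u => γ₂ (u + -s)) (fun u => γ₂' (u + -s)) :=
    IsAC.comp_add_right (by simpa using hγ₂) (by linarith)
  set f := fun u => L c (if u ≤ s then γ₁ u else γ₂ (u + -s))
    (if u ≤ s then γ₁' u else γ₂' (u + -s))
  have e₁ : EqOn f (fun u => L c (γ₁ u) (γ₁' u)) (uIcc 0 s) := fun u hu => by
    rw [uIcc_of_le hs] at hu
    simp only [f, if_pos hu.2]
  have e₂ : EqOn f (fun u => L c (γ₂ (u + -s)) (γ₂' (u + -s))) (uIoc s (s + t)) := fun u hu => by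
    rw [uIoc_of_le (by linarith)] at hu
    simp only [f, if_neg (not_le.2 hu.1)]
  have hI₁' : IntervalIntegrable f volume 0 s :=
    (intervalIntegrable_congr (e₁.mono uIoc_subset_uIcc)).2 hI₁
  have hI₂' : IntervalIntegrable f volume s (s + t) :=
    (intervalIntegrable_congr e₂).2 (by simpa [add_comm] using hI₂.comp_add_right (-s))
  refine ⟨_, _, hγ₁.piecewise hs (by linarith) hγ₂s (by simp [hγ₁s, hγ₂0]), by simp [hs], ?_,
    hI₁'.trans hI₂', ?_⟩
  · rcases ht.eq_or_lt with rfl | ht'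
    · simp [hγ₁s, hγ₂0]
    · simp [ht']
  · rw [← integral_add_adjacent_intervals hI₁' hI₂', integral_congr e₁,
      integral_congr_ae (ae_of_all _ e₂),
      integral_comp_add_right (fun u => L c (γ₂ u) (γ₂' u))]
    simp

theorem integral_mem_costSet {γ γ' : ℝ → E n} (hγ : IsAC 0 t γ γ')
    (hI : IntervalIntegrable (fun s => L c (γ s) (γ' s)) volume 0 t) {a b : ℝ} (ha : 0 ≤ a)
    (hab : a ≤ b) (hb : b ≤ t) :
    (∫ s in a..b, L c (γ s) (γ' s)) ∈ costSet L c (b - a) (γ a) (γ b) := by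
  refine ⟨fun s => γ (s + a), fun s => γ' (s + a),
    IsAC.comp_add_right (by simpa using hγ.mono ha hb) (by linarith), by simp, by simp, ?_, ?_⟩
  · have hIab : IntervalIntegrable (fun s => L c (γ s) (γ' s)) volume a b :=
      hI.mono_set (by
        rw [uIcc_of_le hab, uIcc_of_le (ha.trans (hab.trans hb))]
        exact Icc_subset_Icc ha hb)
    simpa only [sub_self] using hIab.comp_add_right a
  · rw [integral_comp_add_right (fun s => L c (γ s) (γ' s))]
    simp

theorem mC_add_le (hL : QuadraticallyBounded K0 L)
    (hcont : Continuous (fun q : E n × E n × E n => L q.1 q.2.1 q.2.2)) {s : ℝ} (hs : 0 < s)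
    (ht : 0 < t) (x y z : E n) : mC L c (s + t) x z ≤ mC L c s x y + mC L c t y z := by
  have key : ∀ r₁ ∈ costSet L c s x y, mC L c (s + t) x z - r₁ ≤ mC L c t y z :=
    fun r₁ h₁ => le_csInf (costSet_nonempty hL hcont ht y z) fun r₂ h₂ => sub_le_iff_le_add'.2 <|
      mC_le_of_mem_costSet hL (by positivity) (add_mem_costSet hs.le ht.le h₁ h₂)
  have := le_csInf (costSet_nonempty hL hcont hs x y) fun r₁ h₁ =>
    (sub_le_comm.1 (key r₁ h₁) : mC L c (s + t) x z - mC L c t y z ≤ r₁)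
  exact sub_le_iff_le_add.1 this
theorem mC_two_smul_le (hL : QuadraticallyBounded K0 L)
    (hcont : Continuous (fun q : E n × E n × E n => L q.1 q.2.1 q.2.2))
    (hper : ∀ z v (k : Fin n → ℤ), L c (z + intVec n k) v = L c z v) (ht : 2 < t) (y : E n) :
    mC L c t y ((2 : ℝ) • y) ≤ mC L c (t - 2) 0 y + (n + 2 * K0) := by
  set k := intVec n fun i => ⌊y i⌋
  have hk : ‖y - k‖ ^ 2 ≤ n := norm_sub_intVec_floor_sq_le y
  have hsplit : mC L c t y ((2 : ℝ) • y) ≤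
      mC L c 1 y k + mC L c (t - 2) k (y + k) + mC L c 1 (y + k) ((2 : ℝ) • y) :=
    calc mC L c t y ((2 : ℝ) • y) = mC L c (1 + (t - 2) + 1) y ((2 : ℝ) • y) := by
          congr 1; ring
      _ ≤ _ := mC_add_le hL hcont (by linarith) one_pos _ (y + k) _
      _ ≤ _ := add_le_add_left (mC_add_le hL hcont one_pos (by linarith) _ k _) _
  have h₁ := mC_le_line (c := c) hL hcont one_pos y k
  have h₂ : mC L c (t - 2) k (y + k) = mC L c (t - 2) 0 y := by
    have := mC_add_of_periodic (t := t - 2) (x := 0) (y := y) fun z v => hper z v fun i => ⌊y i⌋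
    rwa [zero_add] at this
  have h₃ := mC_le_line (c := c) hL hcont one_pos (y + k) ((2 : ℝ) • y)
  rw [norm_sub_rev] at h₁
  rw [show (2 : ℝ) • y - (y + k) = y - k by rw [two_smul]; abel] at h₃
  linarith

theorem mC_sub_two_le_of_window (hL : QuadraticallyBounded K0 L)
    (hcont : Continuous (fun q : E n × E n × E n => L q.1 q.2.1 q.2.2)) {γ γ' : ℝ → E n}
    (hγ : IsAC 0 t γ γ') (hI : IntervalIntegrable (fun s => L c (γ s) (γ' s)) volume 0 t)
    {j : ℝ} (hj : 0 ≤ j) (hjt : j + 3 ≤ t) :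
    mC L c (t - 2) (γ 0) (γ t) ≤
      (∫ s in 0..t, L c (γ s) (γ' s)) + ‖γ (j + 3) - γ j‖ ^ 2 / 2 + 4 * K0 := by
  have hsub : ∀ {a b}, 0 ≤ a → a ≤ b → b ≤ t →
      IntervalIntegrable (fun s => L c (γ s) (γ' s)) volume a b := fun ha hab hb =>
    hI.mono_set (uIcc_subset_uIcc (mem_uIcc_of_le ha (hab.trans hb))
      (mem_uIcc_of_le (ha.trans hab) hb))
  -- The competitor follows `γ` on `[0, j]`, the segment `γ j → γ (j + 3)` for unit time, and
  -- `γ` again on `[j + 3, t]`; the cost it skips on the window is at least `-3 K0`.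
  obtain ⟨r, hr, hrle⟩ := exists_mem_costSet_le (c := c) hL hcont one_pos (γ j) (γ (j + 3))
  have h₁ := integral_mem_costSet hγ hI le_rfl hj (by linarith : j ≤ t)
  have h₃ := integral_mem_costSet hγ hI (by linarith : (0 : ℝ) ≤ j + 3) hjt le_rfl
  have hmem := add_mem_costSet (by linarith : (0 : ℝ) ≤ j - 0 + 1)
    (by linarith : 0 ≤ t - (j + 3)) (add_mem_costSet (by linarith) zero_le_one h₁ hr) h₃
  rw [show j - 0 + 1 + (t - (j + 3)) = t - 2 by ring] at hmem
  have hwindow := neg_mul_le_of_mem_costSet hL (by linarith : (0 : ℝ) ≤ j + 3 - j)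
    (integral_mem_costSet hγ hI hj (by linarith : j ≤ j + 3) hjt)
  have hsplit := integral_add_adjacent_intervals (hsub le_rfl hj (by linarith : j ≤ t))
    (hsub hj (by linarith : j ≤ j + 3) hjt)
  have hcost := mC_le_of_mem_costSet hL (by linarith : (0 : ℝ) ≤ t - 2) hmem
  rw [← integral_add_adjacent_intervals (hsub le_rfl (by linarith : (0 : ℝ) ≤ j + 3) hjt)
    (hsub (by linarith : (0 : ℝ) ≤ j + 3) hjt le_rfl), ← hsplit]
  linarith

theorem mC_sub_two_le (hL : QuadraticallyBounded K0 L)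
    (hcont : Continuous (fun q : E n × E n × E n => L q.1 q.2.1 q.2.2)) {A : ℝ} (ht : 3 ≤ t)
    (hA : mC L c t x y ≤ A * t) :
    mC L c (t - 2) x y ≤ mC L c t x y + (6 * (A + K0 + 1)) ^ 2 / 2 + 4 * K0 + 1 := by
  have ht0 : 0 < t := by linarith
  obtain ⟨_, ⟨γ, γ', hγ, rfl, rfl, hI, rfl⟩, hlt⟩ :=
    Real.lt_sInf_add_pos (costSet_nonempty (c := c) hL hcont ht0 x y) one_pos
  change _ < mC L c t _ _ + 1 at hlt
  have hnorm : IntervalIntegrable (fun s => ‖γ' s‖) volume 0 t :=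
    (intervalIntegrable_iff_integrableOn_Icc_of_le ht0.le).2 hγ.1.norm
  have hvar : ∫ s in 0..t, ‖γ' s‖ ≤ (∫ s in 0..t, L c (γ s) (γ' s)) + (K0 + 1 / 2) * t := by
    calc ∫ s in 0..t, ‖γ' s‖ ≤ ∫ s in 0..t, (L c (γ s) (γ' s) + (K0 + 1 / 2)) :=
          integral_mono_on ht0.le hnorm (hI.add intervalIntegrable_const) fun s _ => by
            linarith [hL.norm_le c (γ s) (γ' s)]
      _ = _ := by
          rw [integral_add hI intervalIntegrable_const, intervalIntegral.integral_const,
            smul_eq_mul, sub_zero, mul_comm]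
  obtain ⟨j, hj, hjt, hwin⟩ :=
    exists_integral_window_le three_pos ht (fun s => norm_nonneg (γ' s)) hnorm
  have hd : ‖γ (j + 3) - γ j‖ ≤ 6 * (A + K0 + 1) :=
    calc ‖γ (j + 3) - γ j‖ ≤ ∫ s in j..j + 3, ‖γ' s‖ := by
          rw [hγ.2 j (j + 3) hj (by linarith) hjt]
          exact norm_integral_le_integral_norm (by linarith)
      _ ≤ 2 * 3 / t * ((A + K0 + 1 / 2) * t + 1) := hwin.trans <| by gcongr; linarith
      _ = 6 * (A + K0 + 1 / 2) + 6 / t := by field_simp; ring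
      _ ≤ 6 * (A + K0 + 1) := by
          have : 6 / t ≤ 3 := by rw [div_le_iff₀ ht0]; linarith
          linarith
  have := mC_sub_two_le_of_window hL hcont hγ hI hj hjt
  have := pow_le_pow_left₀ (norm_nonneg _) hd 2
  linarith

end Cost

theorem stmt_14_general (n : ℕ) (M0 K0 : ℝ) (hK0 : 0 < K0)
    (L : E n → E n → E n → ℝ)
    (hcont : Continuous (fun q : E n × E n × E n => L q.1 q.2.1 q.2.2))
    (hper : ∀ (x y v : E n) (k : Fin n → ℤ), L x (y + intVec n k) v = L x y v)
    (hbd : ∀ x y v, ‖v‖ ^ 2 / 2 - K0 ≤ L x y v ∧ L x y v ≤ ‖v‖ ^ 2 / 2 + K0) :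
    ∃ C : ℝ, 0 < C ∧
      ∀ (c : E n) (t : ℝ) (y : E n), 0 < t → ‖y‖ ≤ M0 * t →
        mC L c t y ((2:ℝ) • y) ≤ mC L c t 0 y + C := by
  refine ⟨(6 * (M0 ^ 2 / 2 + 2 * K0 + 1)) ^ 2 / 2 + 3 * M0 ^ 2 / 2 + n + 12 * K0 + 1,
    by positivity, fun c t y ht hy => ?_⟩
  have hC : 0 ≤ (6 * (M0 ^ 2 / 2 + 2 * K0 + 1)) ^ 2 / 2 + (n : ℝ) := by positivity
  rcases lt_or_ge t 3 with ht3 | ht3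
  · have h₁ := mC_le_of_norm_sub_le (c := c) hbd hcont ht (x := y) (y := (2 : ℝ) • y)
      (by rwa [two_smul, add_sub_cancel_right])
    have h₂ := neg_mul_le_mC (c := c) hbd hcont ht 0 y
    nlinarith [sq_nonneg M0]
  · have h₁ := mC_two_smul_le hbd hcont (hper c) (by linarith : (2 : ℝ) < t) y
    have h₂ := mC_sub_two_le hbd hcont ht3
      (mC_le_of_norm_sub_le (c := c) hbd hcont ht (by rwa [sub_zero] : ‖y - 0‖ ≤ M0 * t))
    linarith [sq_nonneg M0]

/-- Translation estimate from the proof of the Appendix Lemma: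
`m^c(t, y, 2y) ≤ m^c(t, 0, y) + C` with `C = C(n, M0, K0)` uniform in the frozen
point `c`. -/
theorem stmt_14 (n : ℕ) (hn : 1 ≤ n) (M0 K0 : ℝ) (hM0 : 0 < M0) (hK0 : 0 < K0)
    (L : E n → E n → E n → ℝ)
    (hcont : Continuous (fun q : E n × E n × E n => L q.1 q.2.1 q.2.2))
    (hper : ∀ (x y v : E n) (k : Fin n → ℤ), L x (y + intVec n k) v = L x y v)
    (hconv : ∀ x y, ConvexOn ℝ univ (fun v => L x y v))
    (hbd : ∀ x y v, ‖v‖ ^ 2 / 2 - K0 ≤ L x y v ∧ L x y v ≤ ‖v‖ ^ 2 / 2 + K0) :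
    ∃ C : ℝ, 0 < C ∧
      ∀ (c : E n) (t : ℝ) (y : E n), 0 < t → ‖y‖ ≤ M0 * t →
        mC L c t y ((2:ℝ) • y) ≤ mC L c t 0 y + C :=
  stmt_14_general n M0 K0 hK0 L hcont hper hbd
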